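/- If n ≥ 1 is an odd integer, then λ(ℤ/nℤ) = (1/n) log 2, where λ denotes the Lehmer constant. -/

import Mathlib

/-!
Every integer combination of characters of `ℤ/nℤ` has the form `x ↦ P(ζ^x)` with `P ∈ ℤ[X]` and
`ζ` a primitive `n`-th root of unity. The product of the nonzero values `P(ω)` over the `n`-th
roots of unity `ω` is an algebraic integer fixed by `Gal(ℚ(ζ)/ℚ)`, which permutes these roots, so
it is a rational integer `z`. Hence `n · m(f) = log |z|`, and a positive Mahler measure is at least
`(log 2) / n`. For odd `n` this bound is attained by `1 + χ`: evaluating `X^n - 1 = ∏ (X - ω)` at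
`-1` gives `∏ (1 + ω) = 2`.
-/

open Finset

/-- `f` is a finite integer-coefficient linear combination of characters of the
(discrete) abelian group `G`. -/
def IsAddCharComb (G : Type*) [AddCommGroup G] (f : G → ℂ) : Prop :=
  ∃ (s : Finset (AddChar G Circle)) (c : AddChar G Circle → ℤ),
    f = fun x => ∑ χ ∈ s, (c χ : ℂ) * (χ x : ℂ)

/-- The logarithmic Mahler measure of `f` over a finite group, computed with respect to
the normalized (uniform) Haar probability measure. -/
noncomputable def logMahler {G : Type*} [Fintype G] (f : G → ℂ) : ℝ :=
  (1 / (Fintype.card G : ℝ)) * ∑ x, Real.log ‖f x‖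

/-- The Lehmer constant of a finite abelian group. -/
noncomputable def lehmer (G : Type*) [AddCommGroup G] [Fintype G] : ℝ :=
  sInf {r : ℝ | ∃ f : G → ℂ, IsAddCharComb G f ∧ logMahler f = r ∧ 0 < r}

open Polynomial

lemma Real.log_two_le_log_intCast {z : ℤ} (h : 0 < Real.log z) : Real.log 2 ≤ Real.log z := by
  rw [← Real.log_abs, ← Int.cast_abs] at h
  rw [← Real.log_abs (z : ℝ), ← Int.cast_abs]
  have h2 : (2 : ℤ) ≤ |z| := by
    by_contra! hlt
    exact h.not_ge (Real.log_nonpos (by positivity) (by exact_mod_cast Int.lt_add_one_iff.mp hlt))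
  exact Real.log_le_log two_pos (by exact_mod_cast h2)

lemma IsPrimitiveRoot.image_nthRootsFinset_one {K L : Type*} [Field K] [CommRing L] [IsDomain L]
    [DecidableEq L] {n : ℕ} {ζ : K} (hζ : IsPrimitiveRoot ζ n) (f : K →+* L) :
    (nthRootsFinset n (1 : K)).image f = nthRootsFinset n (1 : L) := by
  refine Finset.eq_of_subset_of_card_le ?_ ?_
  · simpa only [Finset.image_subset_iff] using fun ω hω ↦ map_mem_nthRootsFinset_one hω f
  · rw [Finset.card_image_of_injective _ f.injective, hζ.card_nthRootsFinset, nthRootsFinset_def]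
    exact (Multiset.toFinset_card_le _).trans (Polynomial.card_nthRoots n 1)

noncomputable def prodNonzeroAevalNthRoots (K : Type*) [Field K] [DecidableEq K] (n : ℕ)
    (P : ℤ[X]) : K :=
  ∏ ω ∈ nthRootsFinset n (1 : K) with aeval ω P ≠ 0, aeval ω P

lemma IsPrimitiveRoot.map_prodNonzeroAevalNthRoots {K L : Type*} [Field K] [Field L]
    [DecidableEq K] [DecidableEq L] {n : ℕ} {ζ : K} (hζ : IsPrimitiveRoot ζ n) (f : K →+* L)
    (P : ℤ[X]) : f (prodNonzeroAevalNthRoots K n P) = prodNonzeroAevalNthRoots L n P := by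
  have hf : ∀ ω, f (aeval ω P) = aeval (f ω) P := fun ω ↦
    (aeval_algHom_apply f.toIntAlgHom ω P).symm
  rw [prodNonzeroAevalNthRoots, map_prod, prodNonzeroAevalNthRoots,
    ← hζ.image_nthRootsFinset_one f, Finset.filter_image,
    Finset.prod_image fun x _ y _ h ↦ f.injective h]
  refine Finset.prod_congr ?_ fun ω _ ↦ hf ω
  ext ω
  simp [← hf]

lemma isIntegral_prodNonzeroAevalNthRoots (K : Type*) [Field K] [DecidableEq K] {n : ℕ}
    (hn : 0 < n) (P : ℤ[X]) : IsIntegral ℤ (prodNonzeroAevalNthRoots K n P) := by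
  refine IsIntegral.prod _ fun ω hω ↦ ?_
  have hω : ω ^ n = 1 := (mem_nthRootsFinset hn 1).1 (Finset.mem_filter.1 hω).1
  have hωint : ω ∈ integralClosure ℤ K := (hω ▸ isIntegral_one : IsIntegral ℤ (ω ^ n)).of_pow hn
  rw [← aeval_subalgebra_coe P _ ⟨ω, hωint⟩]
  exact (aeval (⟨ω, hωint⟩ : integralClosure ℤ K) P).prop

lemma IsGalois.exists_intCast_eq_of_isIntegral {K : Type*} [Field K] [Algebra ℚ K]
    [FiniteDimensional ℚ K] [IsGalois ℚ K] {x : K} (hint : IsIntegral ℤ x)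
    (hfix : ∀ σ : K ≃ₐ[ℚ] K, σ x = x) : ∃ z : ℤ, x = z := by
  obtain ⟨q, rfl⟩ := (IsGalois.mem_range_algebraMap_iff_fixed x).2 hfix
  have hq : IsIntegral ℤ q := (isIntegral_algebraMap_iff (algebraMap ℚ K).injective).1 hint
  obtain ⟨z, rfl⟩ := IsIntegrallyClosed.isIntegral_iff.1 hq
  exact ⟨z, by simp⟩

theorem exists_prodNonzeroAevalNthRoots_complex_eq_intCast (n : ℕ) [NeZero n] (P : ℤ[X]) :
    ∃ z : ℤ, prodNonzeroAevalNthRoots ℂ n P = z := by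
  classical
  let K := CyclotomicField n ℚ
  have : IsCyclotomicExtension {n} ℚ K := CyclotomicField.isCyclotomicExtension n ℚ
  have : FiniteDimensional ℚ K := IsCyclotomicExtension.finiteDimensional {n} ℚ K
  have : IsGalois ℚ K := IsCyclotomicExtension.isGalois {n} ℚ K
  have hζ := IsCyclotomicExtension.zeta_spec n ℚ K
  obtain ⟨z, hz⟩ := IsGalois.exists_intCast_eq_of_isIntegral
    (isIntegral_prodNonzeroAevalNthRoots K (NeZero.pos n) P) fun σ ↦
      hζ.map_prodNonzeroAevalNthRoots (σ : K →+* K) P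
  refine ⟨z, ?_⟩
  rw [← hζ.map_prodNonzeroAevalNthRoots (IsAlgClosed.lift : K →ₐ[ℚ] ℂ).toRingHom P, hz,
    map_intCast]

lemma Real.sum_log_norm_eq_log_norm_prod {ι 𝕜 : Type*} [NormedField 𝕜] [DecidableEq 𝕜]
    (s : Finset ι) (F : ι → 𝕜) :
    ∑ i ∈ s, Real.log ‖F i‖ = Real.log ‖∏ i ∈ s with F i ≠ 0, F i‖ := by
  rw [norm_prod, Real.log_prod fun i hi ↦ norm_ne_zero_iff.2 (Finset.mem_filter.1 hi).2,
    Finset.sum_filter_of_ne]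
  intro i _ h hi
  simp [hi] at h

namespace ZMod

variable {n : ℕ} [NeZero n]

lemma isPrimitiveRoot_stdAddChar_one : IsPrimitiveRoot (stdAddChar (1 : ZMod n)) n := by
  have h := stdAddChar_coe (N := n) 1
  rw [Int.cast_one, Int.cast_one, mul_one] at h
  exact h ▸ Complex.isPrimitiveRoot_exp n (NeZero.ne n)

lemma stdAddChar_apply_eq_pow_val (x : ZMod n) :
    stdAddChar x = stdAddChar (1 : ZMod n) ^ x.val := by
  rw [← AddChar.map_nsmul_eq_pow, nsmul_one, natCast_zmod_val]

lemma exists_coe_addChar_eq_stdAddChar_pow (χ : AddChar (ZMod n) Circle) :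
    ∃ a : ℕ, ∀ x, (χ x : ℂ) = stdAddChar x ^ a := by
  have hχ1 : (χ 1 : ℂ) ^ n = 1 := by
    rw [← Circle.coe_pow, ← AddChar.map_nsmul_eq_pow, nsmul_one, natCast_self,
      AddChar.map_zero_eq_one, Circle.coe_one]
  obtain ⟨a, -, ha⟩ := isPrimitiveRoot_stdAddChar_one.eq_pow_of_pow_eq_one hχ1
  refine ⟨a, fun x ↦ ?_⟩
  rw [stdAddChar_apply_eq_pow_val, ← pow_mul, mul_comm, pow_mul, ha, ← Circle.coe_pow,
    ← AddChar.map_nsmul_eq_pow, nsmul_one, natCast_zmod_val]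

lemma image_stdAddChar_univ [DecidableEq ℂ] :
    Finset.univ.image (stdAddChar : ZMod n → ℂ) = nthRootsFinset n (1 : ℂ) := by
  refine Finset.eq_of_subset_of_card_le ?_ ?_
  · intro ω hω
    obtain ⟨x, -, rfl⟩ := Finset.mem_image.1 hω
    rw [mem_nthRootsFinset (NeZero.pos n), ← AddChar.map_nsmul_eq_pow, nsmul_eq_mul,
      natCast_self, zero_mul, AddChar.map_zero_eq_one]
  · rw [Finset.card_image_of_injective _ injective_stdAddChar, Finset.card_univ, card,
      isPrimitiveRoot_stdAddChar_one.card_nthRootsFinset]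

end ZMod

lemma IsAddCharComb.exists_polynomial {n : ℕ} [NeZero n] {f : ZMod n → ℂ}
    (hf : IsAddCharComb (ZMod n) f) : ∃ P : ℤ[X], ∀ x, f x = aeval (ZMod.stdAddChar x) P := by
  obtain ⟨s, c, rfl⟩ := hf
  choose a ha using ZMod.exists_coe_addChar_eq_stdAddChar_pow (n := n)
  exact ⟨∑ χ ∈ s, C (c χ) * X ^ a χ, fun x ↦ by simp [ha]⟩

lemma IsAddCharComb.exists_sum_log_norm_eq_log_intCast {n : ℕ} [NeZero n] {f : ZMod n → ℂ}
    (hf : IsAddCharComb (ZMod n) f) : ∃ z : ℤ, ∑ x, Real.log ‖f x‖ = Real.log z := by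
  obtain ⟨P, hP⟩ := hf.exists_polynomial
  obtain ⟨z, hz⟩ := exists_prodNonzeroAevalNthRoots_complex_eq_intCast n P
  refine ⟨z, ?_⟩
  calc ∑ x, Real.log ‖f x‖
      = ∑ ω ∈ nthRootsFinset n (1 : ℂ), Real.log ‖aeval ω P‖ := by
        rw [← ZMod.image_stdAddChar_univ, Finset.sum_image fun x _ y _ h ↦
          ZMod.injective_stdAddChar h]
        simp only [hP]
    _ = Real.log z := by
        rw [Real.sum_log_norm_eq_log_norm_prod, ← prodNonzeroAevalNthRoots, hz,
          Complex.norm_intCast, Real.log_abs]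

lemma IsAddCharComb.log_two_div_le_logMahler {n : ℕ} [NeZero n] {f : ZMod n → ℂ}
    (hf : IsAddCharComb (ZMod n) f) (hpos : 0 < logMahler f) :
    1 / (n : ℝ) * Real.log 2 ≤ logMahler f := by
  obtain ⟨z, hz⟩ := hf.exists_sum_log_norm_eq_log_intCast
  rw [logMahler, ZMod.card, hz] at hpos ⊢
  have hn : (0 : ℝ) < 1 / n := by have := NeZero.pos n; positivity
  exact mul_le_mul_of_nonneg_left (Real.log_two_le_log_intCast (pos_of_mul_pos_right hpos hn.le))
    hn.le

lemma isAddCharComb_one_add {G : Type*} [AddCommGroup G] (χ : AddChar G Circle) :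
    IsAddCharComb G fun x ↦ 1 + χ x := by
  classical
  refine ⟨{1, χ}, fun ψ ↦ (if ψ = 1 then 1 else 0) + (if ψ = χ then 1 else 0), ?_⟩
  funext x
  simp [add_mul, Finset.sum_add_distrib, ite_mul]

lemma IsPrimitiveRoot.prod_one_add_nthRootsFinset {R : Type*} [CommRing R] [IsDomain R]
    {ζ : R} {n : ℕ} (hζ : IsPrimitiveRoot ζ n) (hodd : Odd n) :
    ∏ ω ∈ nthRootsFinset n (1 : R), (1 + ω) = 2 := by
  have h := congrArg (eval (-1 : R)) (X_pow_sub_one_eq_prod hodd.pos hζ)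
  simp only [eval_sub, eval_pow, eval_X, eval_one, eval_prod, eval_C, hodd.neg_one_pow] at h
  simp_rw [show ∀ ω : R, -1 - ω = -1 * (1 + ω) from fun ω ↦ by ring] at h
  rw [Finset.prod_mul_distrib, Finset.prod_const, hζ.card_nthRootsFinset, hodd.neg_one_pow] at h
  linear_combination h

lemma logMahler_one_add_toCircle {n : ℕ} [NeZero n] (hodd : Odd n) :
    logMahler (fun x : ZMod n ↦ 1 + (ZMod.toCircle x : ℂ)) = 1 / (n : ℝ) * Real.log 2 := by
  simp only [← ZMod.stdAddChar_apply]
  have hprod := ZMod.isPrimitiveRoot_stdAddChar_one.prod_one_add_nthRootsFinset hodd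
  have hne : ∀ ω ∈ nthRootsFinset n (1 : ℂ), 1 + ω ≠ 0 :=
    Finset.prod_ne_zero_iff.1 (hprod ▸ two_ne_zero)
  rw [logMahler, ZMod.card, ← Finset.sum_image (f := fun ω ↦ Real.log ‖1 + ω‖)
    fun x _ y _ h ↦ ZMod.injective_stdAddChar h, ZMod.image_stdAddChar_univ,
    Real.sum_log_norm_eq_log_norm_prod, Finset.filter_true_of_mem hne, hprod]
  norm_num

theorem lehmer_zmod_odd_general (n : ℕ) [NeZero n] (hodd : Odd n) :
    lehmer (ZMod n) = (1 / (n : ℝ)) * Real.log 2 := by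
  have hpos : 0 < 1 / (n : ℝ) * Real.log 2 := by
    have := NeZero.pos n
    positivity
  refine IsLeast.csInf_eq ⟨⟨fun x ↦ 1 + (ZMod.toCircle x : ℂ), isAddCharComb_one_add _,
    logMahler_one_add_toCircle hodd, hpos⟩, ?_⟩
  rintro r ⟨f, hf, rfl, hr⟩
  exact hf.log_two_div_le_logMahler hr

/-- Corollary 4.7: if `n` is odd, then `λ(ℤ/nℤ) = (1/n) log 2`. -/
theorem lehmer_zmod_odd (n : ℕ) [NeZero n] (hn : 1 ≤ n) (hodd : Odd n) :
    lehmer (ZMod n) = (1 / (n : ℝ)) * Real.log 2 :=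
  lehmer_zmod_odd_general n hodd
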